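/- Let V1 ∈ ℝ^{D×d1} and A2 ∈ ℝ^{D×d2} have orthonormal columns with d1 ≥ d2, and suppose B := V1ᵀA2 has full column rank, with singular values cos θ_j for j = 1,…,d2. Then Tr(B† V1ᵀ (I_D − A2A2ᵀ) V1 (B†)ᵀ) = Σ_{j=1}^{d2} tan²θ_j, where B† denotes the Moore–Penrose pseudoinverse of B. -/
import Mathlib


open Matrix

/-- with `d1 ≥ d2`, `B = V1ᵀA2` of full column rank, and principal angles
`θ_j ∈ [0, π/2)` with `cos θ_j = σ_j(B)` (encoded via `cos²θ_j` being the eigenvalues of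
`BᵀB`, since the squared singular values of `B` are exactly the eigenvalues of `BᵀB`),
we have `Tr(B† V1ᵀ (I − A2A2ᵀ) V1 (B†)ᵀ) = Σ_j tan²θ_j`.  The Moore–Penrose pseudoinverse
`B†` is characterized by the four Penrose conditions. -/
theorem pinv_projected_noise_trace_eq_sum_tan_sq
    (D d1 d2 : ℕ) (hd : d2 ≤ d1)
    (V1 : Matrix (Fin D) (Fin d1) ℝ) (A2 : Matrix (Fin D) (Fin d2) ℝ)
    (hV1 : V1ᵀ * V1 = 1) (hA2 : A2ᵀ * A2 = 1)
    (B : Matrix (Fin d1) (Fin d2) ℝ) (hB : B = V1ᵀ * A2)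
    (hrank : B.rank = d2)
    (Bd : Matrix (Fin d2) (Fin d1) ℝ)
    (hP1 : B * Bd * B = B) (hP2 : Bd * B * Bd = Bd)
    (hP3 : (B * Bd)ᵀ = B * Bd) (hP4 : (Bd * B)ᵀ = Bd * B)
    (θ : Fin d2 → ℝ) (hθrange : ∀ j, θ j ∈ Set.Ico (0 : ℝ) (Real.pi / 2))
    (hG : (Bᵀ * B).IsHermitian)
    (hθ : ∀ j, Real.cos (θ j) ^ 2 = hG.eigenvalues j) :
    (Bd * V1ᵀ * ((1 : Matrix (Fin D) (Fin D) ℝ) - A2 * A2ᵀ) * V1 * Bdᵀ).trace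
      = ∑ j, Real.tan (θ j) ^ 2 := by
  -- cosines are positive
  have hcos : ∀ j, 0 < Real.cos (θ j) := by
    intro j
    apply Real.cos_pos_of_mem_Ioo
    constructor
    · have := Real.pi_pos
      have := (hθrange j).1
      linarith
    · exact (hθrange j).2
  have hlampos : ∀ j, 0 < hG.eigenvalues j := fun j => (hθ j) ▸ pow_pos (hcos j) 2
  -- abstract the spectral data
  obtain ⟨U, ev, hU1, hU2, hspec, hev⟩ :
      ∃ (U : Matrix (Fin d2) (Fin d2) ℝ) (ev : Fin d2 → ℝ),
        star U * U = 1 ∧ U * star U = 1 ∧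
        Bᵀ * B = U * diagonal ev * star U ∧ ev = hG.eigenvalues := by
    refine ⟨(IsHermitian.eigenvectorUnitary hG : Matrix (Fin d2) (Fin d2) ℝ),
      hG.eigenvalues,
      (Matrix.mem_unitaryGroup_iff').mp (IsHermitian.eigenvectorUnitary hG).2,
      (Matrix.mem_unitaryGroup_iff).mp (IsHermitian.eigenvectorUnitary hG).2,
      ?_, rfl⟩
    have h := hG.spectral_theorem
    have hDfun : (RCLike.ofReal ∘ hG.eigenvalues : Fin d2 → ℝ) = hG.eigenvalues := by
      funext i; simp [RCLike.ofReal]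
    rw [hDfun] at h
    exact h
  have hevpos : ∀ j, 0 < ev j := fun j => hev ▸ hlampos j
  have hθ' : ∀ j, Real.cos (θ j) ^ 2 = ev j := fun j => hev ▸ hθ j
  -- Bᵀ * B is invertible
  have hdet : (Bᵀ * B).det ≠ 0 := by
    have h := hG.det_eq_prod_eigenvalues
    have hp : (0:ℝ) < ∏ i, hG.eigenvalues i := Finset.prod_pos fun i _ => hlampos i
    rw [show (Bᵀ * B).det = ∏ i, hG.eigenvalues i by simpa using h]
    exact ne_of_gt hp
  have hu : IsUnit (Bᵀ * B).det := isUnit_iff_ne_zero.mpr hdet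
  have hGinv : (Bᵀ * B)⁻¹ * (Bᵀ * B) = 1 := Matrix.nonsing_inv_mul _ hu
  -- Bd is a left inverse of B
  have hP1' : B * (Bd * B) = B := by rw [← Matrix.mul_assoc, hP1]
  have h1 : (Bᵀ * B) * (Bd * B) = Bᵀ * B := by
    rw [Matrix.mul_assoc, hP1']
  have hBdB : Bd * B = 1 := by
    calc Bd * B = 1 * (Bd * B) := (Matrix.one_mul _).symm
      _ = (Bᵀ * B)⁻¹ * ((Bᵀ * B) * (Bd * B)) := by rw [← hGinv, Matrix.mul_assoc]
      _ = (Bᵀ * B)⁻¹ * (Bᵀ * B) := by rw [h1]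
      _ = 1 := hGinv
  have hBd2 : Bd = Bd * (Bdᵀ * Bᵀ) := by
    calc Bd = Bd * B * Bd := hP2.symm
      _ = Bd * (B * Bd) := by rw [Matrix.mul_assoc]
      _ = Bd * (B * Bd)ᵀ := by rw [hP3]
      _ = Bd * (Bdᵀ * Bᵀ) := by rw [transpose_mul]
  have hright : (Bd * Bdᵀ) * (Bᵀ * B) = 1 := by
    calc (Bd * Bdᵀ) * (Bᵀ * B) = (Bd * (Bdᵀ * Bᵀ)) * B := by
          simp only [Matrix.mul_assoc]
      _ = Bd * B := by rw [← hBd2]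
      _ = 1 := hBdB
  have hBdBd : Bd * Bdᵀ = (Bᵀ * B)⁻¹ := (Matrix.inv_eq_left_inv hright).symm
  have hBT : Bᵀ = A2ᵀ * V1 := by rw [hB, transpose_mul, transpose_transpose]
  -- simplify the matrix expression
  have t1 : Bd * V1ᵀ * V1 * Bdᵀ = Bd * Bdᵀ := by
    rw [Matrix.mul_assoc Bd V1ᵀ V1, hV1, Matrix.mul_one]
  have t2 : Bd * V1ᵀ * (A2 * A2ᵀ) * V1 * Bdᵀ = 1 := by
    have hre : Bd * V1ᵀ * (A2 * A2ᵀ) * V1 * Bdᵀ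
        = (Bd * (V1ᵀ * A2)) * ((A2ᵀ * V1) * Bdᵀ) := by
      simp only [Matrix.mul_assoc]
    rw [hre, ← hB, ← hBT]
    rw [show Bᵀ * Bdᵀ = (Bd * B)ᵀ from (transpose_mul Bd B).symm, hBdB, transpose_one,
      Matrix.mul_one]
  have hE : Bd * V1ᵀ * ((1 : Matrix (Fin D) (Fin D) ℝ) - A2 * A2ᵀ) * V1 * Bdᵀ
      = (Bᵀ * B)⁻¹ - 1 := by
    calc Bd * V1ᵀ * ((1 : Matrix (Fin D) (Fin D) ℝ) - A2 * A2ᵀ) * V1 * Bdᵀ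
        = Bd * V1ᵀ * V1 * Bdᵀ - Bd * V1ᵀ * (A2 * A2ᵀ) * V1 * Bdᵀ := by
          simp only [Matrix.mul_sub, Matrix.sub_mul, Matrix.mul_one]
      _ = (Bᵀ * B)⁻¹ - 1 := by rw [t1, t2, hBdBd]
  -- compute the inverse explicitly
  have hdd : diagonal ev * diagonal (fun i => (ev i)⁻¹) = 1 := by
    rw [diagonal_mul_diagonal]
    calc (diagonal fun i => ev i * (ev i)⁻¹) = diagonal (fun _ => (1:ℝ)) :=
          congrArg diagonal (funext fun i => mul_inv_cancel₀ (ne_of_gt (hevpos i)))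
      _ = 1 := diagonal_one
  have hinv_eq : (Bᵀ * B)⁻¹ = U * diagonal (fun i => (ev i)⁻¹) * star U := by
    apply Matrix.inv_eq_right_inv
    calc (Bᵀ * B) * (U * diagonal (fun i => (ev i)⁻¹) * star U)
        = U * (diagonal ev * ((star U * U) * (diagonal (fun i => (ev i)⁻¹) * star U))) := by
          rw [hspec]; simp only [Matrix.mul_assoc]
      _ = U * (diagonal ev * (diagonal (fun i => (ev i)⁻¹) * star U)) := by
          rw [hU1, Matrix.one_mul]
      _ = U * ((diagonal ev * diagonal (fun i => (ev i)⁻¹)) * star U) := by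
          rw [Matrix.mul_assoc]
      _ = U * star U := by rw [hdd, Matrix.one_mul]
      _ = 1 := hU2
  have htr : ((Bᵀ * B)⁻¹).trace = ∑ j, (ev j)⁻¹ := by
    rw [hinv_eq, Matrix.trace_mul_comm, ← Matrix.mul_assoc, hU1, Matrix.one_mul,
      Matrix.trace_diagonal]
  rw [hE, Matrix.trace_sub, htr, Matrix.trace_one]
  have hcard : (Fintype.card (Fin d2) : ℝ) = ∑ _j : Fin d2, (1:ℝ) := by simp
  rw [hcard, ← Finset.sum_sub_distrib]
  apply Finset.sum_congr rfl
  intro j _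
  have hc' : Real.cos (θ j) ≠ 0 := ne_of_gt (hcos j)
  rw [← hθ' j, Real.tan_eq_sin_div_cos, div_pow, Real.sin_sq]
  field_simp
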